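/- Let c > 0, T > 0, and let U : [0, T) → ℝ be a differentiable function such that U'(t) ≤ 4 U(t)^2 + 4c for all t ∈ [0, T), and such that lim sup_{t → T⁻} U(t) = +∞. Then for every t ∈ [0, T) with 0 < T − t < π/(16√c), one has U(t) ≥ 1/(4√2 (T − t)). -/

import Mathlib

open Real Set Filter Topology

/-! Put `a = √c`. The inequality says `U' ≤ 4 (U² + a²)`, which is exactly the statement that
`arctan (U / a) - 4 a t` is nonincreasing. Along times approaching `T` on which `U` is large,
`arctan (U / a)` comes arbitrarily close to `π / 2`, so `arctan (U t / a) ≥ π / 2 - 4 a (T - t)`,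
i.e. `U t ≥ a cot (4 a (T - t))`. Finally `cot x ≥ 1 / (√2 x)` on `(0, π / 4]`, because there
`sin x ≤ x` and `cos x ≥ √2 / 2`. -/

theorem Filter.frequently_lt_of_limsup_coe_eq_top {α : Type*} {l : Filter α} {u : α → ℝ}
    (h : limsup (fun x => (u x : EReal)) l = ⊤) (M : ℝ) : ∃ᶠ x in l, M < u x :=
  (frequently_lt_of_lt_limsup (b := (M : EReal)) (by isBoundedDefault)
    (h ▸ EReal.coe_lt_top M)).mono fun _ hx => EReal.coe_lt_coe_iff.mp hx

theorem antitoneOn_arctan_div_sub_of_deriv_le {D : Set ℝ} (hD : Convex ℝ D) {U U' : ℝ → ℝ}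
    {a b : ℝ} (ha : 0 < a) (hderiv : ∀ t ∈ D, HasDerivAt U (U' t) t)
    (hle : ∀ t ∈ D, U' t ≤ b * (U t ^ 2 + a ^ 2)) :
    AntitoneOn (fun t => arctan (U t / a) - a * b * t) D := by
  have hf : ∀ t ∈ D, HasDerivAt (fun t => arctan (U t / a) - a * b * t)
      (1 / (1 + (U t / a) ^ 2) * (U' t / a) - a * b) t := fun t ht =>
    (((hderiv t ht).div_const a).arctan).sub ((hasDerivAt_id t).const_mul (a * b)) |>.congr_deriv
      (by simp)
  refine antitoneOn_of_hasDerivWithinAt_nonpos hD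
    (fun t ht => (hf t ht).continuousAt.continuousWithinAt)
    (fun t ht => (hf t (interior_subset ht)).hasDerivWithinAt) fun t ht => ?_
  have hpos : 0 < U t ^ 2 + a ^ 2 := by positivity
  have hrw : 1 / (1 + (U t / a) ^ 2) * (U' t / a) = a * U' t / (U t ^ 2 + a ^ 2) := by
    field_simp; ring
  rw [hrw, sub_nonpos, div_le_iff₀ hpos, mul_assoc]
  exact mul_le_mul_of_nonneg_left (hle t (interior_subset ht)) ha.le

theorem pi_div_two_sub_le_arctan_of_antitoneOn {g : ℝ → ℝ} {t T k : ℝ} (htT : t < T)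
    (hk : 0 ≤ k) (hanti : AntitoneOn (fun s => arctan (g s) - k * s) (Ico t T))
    (hunb : ∀ M, ∃ᶠ s in 𝓝[<] T, M < g s) :
    π / 2 - k * (T - t) ≤ arctan (g t) := by
  refine le_of_forall_lt fun θ hθ => ?_
  obtain ⟨M, hM⟩ := ((tendsto_arctan_atTop.mono_right nhdsWithin_le_nhds).eventually
    (eventually_gt_nhds (show θ + k * (T - t) < π / 2 by linarith))).exists_forall_of_atTop
  obtain ⟨s, hMs, hts, hsT⟩ := ((hunb M).and_eventually (Ioo_mem_nhdsLT htT)).exists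
  have hmono : arctan (g s) - k * s ≤ arctan (g t) - k * t :=
    hanti ⟨le_rfl, htT⟩ ⟨hts.le, hsT⟩ hts.le
  have hks : k * s ≤ k * T := mul_le_mul_of_nonneg_left hsT.le hk
  linarith [hM (g s) hMs.le]

theorem Real.inv_tan_le_of_pi_div_two_sub_le_arctan {x y : ℝ} (hx0 : 0 < x) (hx : x < π / 2)
    (h : π / 2 - x ≤ arctan y) : (tan x)⁻¹ ≤ y := by
  rw [← tan_pi_div_two_sub, ← tan_arctan y]
  exact strictMonoOn_tan.monotoneOn ⟨by linarith, by linarith⟩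
    ⟨neg_pi_div_two_lt_arctan y, arctan_lt_pi_div_two y⟩ h

theorem Real.tan_le_sqrt_two_mul {x : ℝ} (hx0 : 0 ≤ x) (hx : x ≤ π / 4) : tan x ≤ √2 * x := by
  have hcos : √2 / 2 ≤ cos x := by
    rw [← cos_pi_div_four]
    exact cos_le_cos_of_nonneg_of_le_pi hx0 (by linarith [pi_pos]) hx
  calc tan x = sin x / cos x := tan_eq_sin_div_cos x
    _ ≤ x / (√2 / 2) := div_le_div₀ hx0 (sin_le hx0) (by positivity) hcos
    _ = √2 * x := by field_simp; rw [sq_sqrt zero_le_two]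

theorem blowup_lower_bound_general
    (c T : ℝ) (hc : 0 < c)
    (U U' : ℝ → ℝ)
    (hderiv : ∀ t ∈ Ico (0 : ℝ) T, HasDerivAt U (U' t) t)
    (hineq : ∀ t ∈ Ico (0 : ℝ) T, U' t ≤ 4 * (U t) ^ 2 + 4 * c)
    (hblow : Filter.limsup (fun t => (U t : EReal)) (nhdsWithin T (Iio T)) = ⊤) :
    ∀ t ∈ Ico (0 : ℝ) T, 0 < T - t → T - t < π / (16 * Real.sqrt c) →
      U t ≥ 1 / (4 * Real.sqrt 2 * (T - t)) := by
  intro t ht hTt hTt_lt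
  set a := √c
  have ha : 0 < a := sqrt_pos.mpr hc
  have hanti : AntitoneOn (fun s => arctan (U s / a) - a * 4 * s) (Ico t T) :=
    (antitoneOn_arctan_div_sub_of_deriv_le (convex_Ico 0 T) ha hderiv fun s hs => by
      rw [sq_sqrt hc.le]; linarith [hineq s hs]).mono (Ico_subset_Ico_left ht.1)
  have hunb (M : ℝ) : ∃ᶠ s in 𝓝[<] T, M < U s / a :=
    (frequently_lt_of_limsup_coe_eq_top hblow (M * a)).mono fun _ hs => (lt_div_iff₀ ha).mpr hs
  have harctan := pi_div_two_sub_le_arctan_of_antitoneOn ht.2 (by positivity) hanti hunb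
  set x := a * 4 * (T - t)
  have hx0 : 0 < x := by positivity
  have hx : x ≤ π / 4 := by
    rw [lt_div_iff₀ (by positivity)] at hTt_lt; linarith
  have hcot := inv_tan_le_of_pi_div_two_sub_le_arctan hx0 (by linarith [pi_pos]) harctan
  have htan_pos : 0 < tan x := tan_pos_of_pos_of_lt_pi_div_two hx0 (by linarith [pi_pos])
  calc 1 / (4 * √2 * (T - t)) = a * (√2 * x)⁻¹ := by unfold x; field_simp
    _ ≤ a * (tan x)⁻¹ := by gcongr; exact tan_le_sqrt_two_mul hx0.le hx
    _ ≤ U t := by rwa [le_div_iff₀ ha, mul_comm] at hcot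

/-- Lemma 6.1 (ODE part): if `U' ≤ 4 U² + 4c` on `[0, T)` and
`limsup_{t → T⁻} U(t) = +∞`, then `U(t) ≥ 1 / (4 √2 (T - t))`
whenever `0 < T - t < π / (16 √c)`. -/
theorem blowup_lower_bound
    (c T : ℝ) (hc : 0 < c) (hT : 0 < T)
    (U U' : ℝ → ℝ)
    (hderiv : ∀ t ∈ Ico (0 : ℝ) T, HasDerivAt U (U' t) t)
    (hineq : ∀ t ∈ Ico (0 : ℝ) T, U' t ≤ 4 * (U t) ^ 2 + 4 * c)
    (hblow : Filter.limsup (fun t => (U t : EReal)) (nhdsWithin T (Iio T)) = ⊤) :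
    ∀ t ∈ Ico (0 : ℝ) T, 0 < T - t → T - t < π / (16 * Real.sqrt c) →
      U t ≥ 1 / (4 * Real.sqrt 2 * (T - t)) :=
  blowup_lower_bound_general c T hc U U' hderiv hineq hblow
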